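/- Let ℓ ≥ 4 be an integer and G an arbitrary graph. Then the number of triangles in G that do not align with any copy of C_ℓ in G is at most (ℓ−3)·|E(G)|/3. Moreover, for every vertex v of G, the number of such triangles containing v is at most (ℓ−3)·d(v)/2, where d(v) is the degree of v. -/

import Mathlib

open SimpleGraph

/-- `A` is a copy of `H`: the subgraph `A` of its ambient graph is isomorphic to `H`. -/
def SimpleGraph.Subgraph.IsCopyOf {V W : Type*} {G : SimpleGraph V} (A : G.Subgraph)
    (H : SimpleGraph W) : Prop :=
  Nonempty (A.coe ≃g H)

/-- Two subgraphs of `G` align if the vertex set of one contains that of the other. -/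
def SimpleGraph.Subgraph.Aligns {V : Type*} {G : SimpleGraph V} (A B : G.Subgraph) : Prop :=
  A.verts ⊆ B.verts ∨ B.verts ⊆ A.verts

/-- A subgraph is nice (w.r.t. `F`) if it aligns with no copy of `F`. -/
def SimpleGraph.Subgraph.Nice {V W : Type*} {G : SimpleGraph V} (A : G.Subgraph)
    (F : SimpleGraph W) : Prop :=
  ∀ B : G.Subgraph, B.IsCopyOf F → ¬ A.Aligns B

/-- `N(H,G)`: the number of copies of `H` in `G`. -/
noncomputable def copyCount {V W : Type*} (H : SimpleGraph W) (G : SimpleGraph V) : ℕ :=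
  Nat.card {A : G.Subgraph // A.IsCopyOf H}

/-- `N_re(H,F,G)`: the number of copies of `H` in `G` that align with no copy of `F`. -/
noncomputable def niceCopyCount {V W U : Type*} (H : SimpleGraph W) (F : SimpleGraph U)
    (G : SimpleGraph V) : ℕ :=
  Nat.card {A : G.Subgraph // A.IsCopyOf H ∧ A.Nice F}

/-- `G` is `F`-free: `G` contains no copy of `F`. -/
def FreeOf {V W : Type*} (F : SimpleGraph W) (G : SimpleGraph V) : Prop :=
  ¬ ∃ A : G.Subgraph, A.IsCopyOf F

/-- `ex_re(n,H,F)`: the maximum of `N_re(H,F,G)` over `n`-vertex graphs `G`. -/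
noncomputable def exRe {W U : Type*} (n : ℕ) (H : SimpleGraph W) (F : SimpleGraph U) : ℕ :=
  sSup {N | ∃ G : SimpleGraph (Fin n), N = niceCopyCount H F G}

/-- `ex(n,H,F)`: the maximum number of copies of `H` in an `n`-vertex `F`-free graph. -/
noncomputable def exGen {W U : Type*} (n : ℕ) (H : SimpleGraph W) (F : SimpleGraph U) : ℕ :=
  sSup {N | ∃ G : SimpleGraph (Fin n), FreeOf F G ∧ N = copyCount H G}

/-!
Join two neighbours `x`, `y` of a vertex `v` whenever `v x y` is a nice triangle. This link
graph on `N(v)` has one edge per nice triangle at `v`, and it contains no path on `ℓ - 1`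
vertices: with `v`, such a path `x₁ … x_{ℓ-1}` would form a copy of `C_ℓ` containing the
triangle `v x₁ x₂`. The Erdős–Gallai theorem therefore bounds its number of edges by
`(ℓ - 3) d(v) / 2`. Summing over `v` counts every nice triangle three times, and `∑ d(v) = 2|E|`.

Erdős–Gallai (no path on `m + 2` vertices forces at most `m n / 2` edges) goes by induction:
delete a vertex of degree at most `m / 2`, or split along a disconnection. Otherwise a longest
path closes into a cycle, as its ends have degree sum at least its length, and connectivity
extends that cycle to a longer path unless it spans the graph, which then has at most `m + 1`
vertices.
-/

open Finset

namespace Cycle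

variable {α : Type*} {r : α → α → Prop}

theorem chain_coe_iff {l : List α} :
    Chain r (l : Cycle α) ↔ l.IsChain r ∧ ∀ x ∈ l.getLast?, ∀ y ∈ l.head?, r x y := by
  cases l with
  | nil => simp
  | cons a l =>
    rw [chain_coe_cons, ← List.cons_append, List.isChain_append]
    simp

theorem chain_append_reverse [Std.Symm r] {l₁ l₂ : List α} (h : (l₁ ++ l₂).IsChain r)
    (hl₁ : l₁ ≠ []) (hl₂ : l₂ ≠ [])
    (hlast : ∀ x ∈ l₁.getLast?, ∀ y ∈ l₂.getLast?, r x y)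
    (hhead : ∀ x ∈ l₁.head?, ∀ y ∈ l₂.head?, r x y) :
    Chain r (l₁ ++ l₂.reverse : List α) := by
  rw [List.isChain_append] at h
  have h₂ : l₂.reverse.IsChain r :=
    List.isChain_reverse.2 (h.2.1.imp fun _ _ hxy => Std.Symm.symm _ _ hxy)
  rw [chain_coe_iff, List.isChain_append]
  refine ⟨⟨h.1, h₂, by simpa [List.head?_reverse] using hlast⟩, ?_⟩
  obtain ⟨x, l₁, rfl⟩ := List.exists_cons_of_ne_nil hl₁
  obtain ⟨y, l₂, rfl⟩ := List.exists_cons_of_ne_nil hl₂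
  rw [List.reverse_cons, ← List.append_assoc, List.getLast?_concat]
  simpa using Std.Symm.symm _ _ (hhead x rfl y rfl)

theorem Chain.rel_getElem_mod {l : List α} (h : Chain r l) (i : ℕ) (hi : i < l.length) :
    r l[i] (l[(i + 1) % l.length]'(Nat.mod_lt _ (Nat.zero_lt_of_lt hi))) := by
  rw [chain_coe_iff] at h
  by_cases hi' : i + 1 < l.length
  · simp only [Nat.mod_eq_of_lt hi']
    exact List.isChain_iff_getElem.1 h.1 i hi'
  · have hpos : 0 < l.length := Nat.zero_lt_of_lt hi
    obtain rfl : i = l.length - 1 := by omega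
    simp only [Nat.sub_add_cancel hpos, Nat.mod_self]
    refine h.2 _ ?_ _ ?_ <;> simp [List.getLast?_eq_getElem?, List.head?_eq_getElem?]

end Cycle

theorem List.exists_eq_append_cons_cons_of_length_tail_lt {α : Type*} (p q : α → Bool) :
    ∀ l : List α, l.tail.length < l.tail.countP p + l.dropLast.countP q →
      ∃ l₁ x y l₂, l = l₁ ++ x :: y :: l₂ ∧ q x ∧ p y
  | [] | [_] => by simp
  | c :: d :: r => by
    intro h
    by_cases hcd : q c ∧ p d
    · exact ⟨[], c, d, r, rfl, hcd⟩
    obtain ⟨l₁, x, y, l₂, hr, hxy⟩ :=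
      exists_eq_append_cons_cons_of_length_tail_lt p q (d :: r) (by
        simp only [tail_cons, length_cons, countP_cons, dropLast_cons_cons] at h ⊢
        cases hc : q c <;> cases hd : p d <;> simp_all <;> omega)
    exact ⟨c :: l₁, x, y, l₂, by rw [hr, cons_append], hxy⟩

theorem Finset.card_filter_le_countP {α : Type*} [DecidableEq α] {s : Finset α} {l : List α}
    (p : α → Prop) [DecidablePred p] (h : ∀ x ∈ s, p x → x ∈ l) :
    #{x ∈ s | p x} ≤ l.countP (p ·) :=
  calc #{x ∈ s | p x} ≤ #(l.filter (p ·)).toFinset :=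
        card_le_card fun x hx => by
          rw [mem_filter] at hx
          simpa [hx.2] using h x hx.1 hx.2
    _ ≤ (l.filter (p ·)).length := List.toFinset_card_le _
    _ = l.countP (p ·) := List.countP_eq_length_filter.symm

namespace SimpleGraph

variable {V : Type*}

section Paths

variable {H : SimpleGraph V} {s t : Finset V} {xs : List V}

-- A path is a list of distinct vertices, so `xs.length` counts vertices rather than edges.
structure IsPathIn (H : SimpleGraph V) (s : Finset V) (xs : List V) : Prop where
  isChain : xs.IsChain H.Adj
  nodup : xs.Nodup
  mem : ∀ x ∈ xs, x ∈ s

namespace IsPathIn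

theorem mono (h : H.IsPathIn s xs) (hst : s ⊆ t) : H.IsPathIn t xs :=
  ⟨h.isChain, h.nodup, fun x hx => hst (h.mem x hx)⟩

theorem reverse (h : H.IsPathIn s xs) : H.IsPathIn s xs.reverse :=
  ⟨List.isChain_reverse.2 (h.isChain.imp fun _ _ hxy => hxy.symm), List.nodup_reverse.2 h.nodup,
    fun x hx => h.mem x (List.mem_reverse.1 hx)⟩

theorem take (h : H.IsPathIn s xs) (n : ℕ) : H.IsPathIn s (xs.take n) :=
  ⟨h.isChain.take n, (List.take_sublist n xs).nodup h.nodup,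
    fun x hx => h.mem x (List.mem_of_mem_take hx)⟩

theorem cons (h : H.IsPathIn s xs) {y : V} (hy : y ∈ s) (hyxs : y ∉ xs)
    (hadj : ∀ x ∈ xs.head?, H.Adj y x) : H.IsPathIn s (y :: xs) :=
  ⟨List.isChain_cons.2 ⟨hadj, h.isChain⟩, List.nodup_cons.2 ⟨hyxs, h.nodup⟩,
    List.forall_mem_cons.2 ⟨hy, h.mem⟩⟩

theorem length_le_card [DecidableEq V] (h : H.IsPathIn s xs) : xs.length ≤ #s := by
  rw [← List.toFinset_card_of_nodup h.nodup]
  exact card_le_card fun x hx => h.mem x (List.mem_toFinset.1 hx)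

theorem mem_of_adj_of_mem_head? (h : H.IsPathIn s xs)
    (hmax : ∀ ys, H.IsPathIn s ys → ys.length ≤ xs.length) {a y : V} (ha : a ∈ xs.head?)
    (hy : y ∈ s) (hay : H.Adj a y) : y ∈ xs := by
  by_contra hyxs
  have := hmax _ (h.cons hy hyxs fun x hx => Option.mem_unique ha hx ▸ hay.symm)
  simp at this

theorem mem_of_adj_of_mem_getLast? (h : H.IsPathIn s xs)
    (hmax : ∀ ys, H.IsPathIn s ys → ys.length ≤ xs.length) {b y : V} (hb : b ∈ xs.getLast?)
    (hy : y ∈ s) (hby : H.Adj b y) : y ∈ xs :=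
  List.mem_reverse.1 <| h.reverse.mem_of_adj_of_mem_head? (by simpa using hmax)
    (by rwa [List.head?_reverse]) hy hby

/-- All neighbours of the ends of a longest path lie on it, so this is pigeonhole over its pairs
of consecutive vertices. -/
theorem exists_eq_append_cons_cons [DecidableEq V] [DecidableRel H.Adj] (h : H.IsPathIn s xs)
    (hmax : ∀ ys, H.IsPathIn s ys → ys.length ≤ xs.length) {a b : V} (ha : a ∈ xs.head?)
    (hb : b ∈ xs.getLast?)
    (hdeg : xs.length ≤ #{y ∈ s | H.Adj a y} + #{y ∈ s | H.Adj b y}) :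
    ∃ l₁ x y l₂, xs = l₁ ++ x :: y :: l₂ ∧ H.Adj b x ∧ H.Adj a y := by
  obtain ⟨r, rfl⟩ : ∃ r, xs = a :: r := ⟨xs.tail, (List.cons_head?_tail ha).symm⟩
  obtain ⟨r', hr'⟩ := List.getLast?_eq_some_iff.1 hb
  have hr : ∀ y ∈ s, H.Adj a y → y ∈ r := fun y hy hay =>
    (List.mem_cons.1 (h.mem_of_adj_of_mem_head? hmax ha hy hay)).resolve_left hay.ne'
  have hr' : ∀ y ∈ s, H.Adj b y → y ∈ (a :: r).dropLast := fun y hy hby => by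
    have := h.mem_of_adj_of_mem_getLast? hmax hb hy hby
    rw [hr', List.mem_append, List.mem_singleton] at this
    rw [hr', List.dropLast_concat]
    exact this.resolve_right hby.ne'
  have := card_filter_le_countP (H.Adj a) hr
  have := card_filter_le_countP (H.Adj b) hr'
  simpa using List.exists_eq_append_cons_cons_of_length_tail_lt (H.Adj a ·) (H.Adj b ·) (a :: r)
    (by simp only [List.tail_cons, List.length_cons] at hdeg ⊢; omega)

theorem exists_perm_cycle [DecidableEq V] [DecidableRel H.Adj] (h : H.IsPathIn s xs)
    (hmax : ∀ ys, H.IsPathIn s ys → ys.length ≤ xs.length) {a b : V} (ha : a ∈ xs.head?)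
    (hb : b ∈ xs.getLast?)
    (hdeg : xs.length ≤ #{y ∈ s | H.Adj a y} + #{y ∈ s | H.Adj b y}) :
    ∃ ys : List V, ys.Perm xs ∧ Cycle.Chain H.Adj ys := by
  obtain ⟨l₁, x, y, l₂, hxs, hbx, hay⟩ := h.exists_eq_append_cons_cons hmax ha hb hdeg
  obtain rfl : xs = (l₁ ++ [x]) ++ (y :: l₂) := by simp [hxs]
  have := H.symm
  refine ⟨(l₁ ++ [x]) ++ (y :: l₂).reverse, (List.reverse_perm _).append_left _,
    Cycle.chain_append_reverse h.isChain (by simp) (by simp) ?_ ?_⟩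
  · intro p hp q hq
    obtain rfl : p = x := by simpa using hp.symm
    obtain rfl : q = b := Option.mem_unique hq (by simpa [List.getLast?_append] using hb)
    exact hbx.symm
  · intro p hp q hq
    obtain rfl : p = a := Option.mem_unique hp (by simpa [List.head?_append] using ha)
    obtain rfl : q = y := by simpa using hq.symm
    exact hay

end IsPathIn

theorem exists_isPathIn_forall_length_le (H : SimpleGraph V) (s : Finset V) :
    ∃ xs, H.IsPathIn s xs ∧ ∀ ys, H.IsPathIn s ys → ys.length ≤ xs.length := by
  classical
  let P n := ∃ xs, H.IsPathIn s xs ∧ xs.length = n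
  obtain ⟨xs, hxs, hlen⟩ : P (Nat.findGreatest P #s) :=
    Nat.findGreatest_spec (Nat.zero_le _) ⟨[], ⟨.nil, .nil, by simp⟩, rfl⟩
  exact ⟨xs, hxs, fun ys hys =>
    hlen ▸ Nat.le_findGreatest hys.length_le_card ⟨ys, hys, rfl⟩⟩

theorem exists_isPathIn_length_eq_succ_of_cycle {ys : List V} (hc : Cycle.Chain H.Adj ys)
    (hnd : ys.Nodup) (hys : ∀ y ∈ ys, y ∈ s) {u x : V} (hu : u ∈ ys) (hx : x ∈ s)
    (hxys : x ∉ ys) (hux : H.Adj u x) :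
    ∃ zs, H.IsPathIn s zs ∧ zs.length = ys.length + 1 := by
  obtain ⟨l₁, l₂, rfl⟩ := List.append_of_mem hu
  have hrot : (l₁ ++ u :: l₂) ~r (u :: (l₂ ++ l₁)) := List.isRotated_append
  rw [Cycle.coe_eq_coe.2 hrot, Cycle.chain_coe_iff] at hc
  have hpath : H.IsPathIn s (u :: (l₂ ++ l₁)) :=
    ⟨hc.1, hrot.perm.nodup_iff.1 hnd, fun y hy => hys y (hrot.perm.symm.subset hy)⟩
  refine ⟨x :: u :: (l₂ ++ l₁), hpath.cons hx (fun h => hxys (hrot.perm.symm.subset h))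
    (by simpa using hux.symm), ?_⟩
  simp only [List.length_cons, List.length_append]
  omega

theorem card_le_of_forall_isPathIn_length_le [DecidableEq V] [DecidableRel H.Adj] {m : ℕ}
    (hconn : ∀ C ⊆ s, C.Nonempty → C ≠ s → ∃ u ∈ C, ∃ x ∈ s \ C, H.Adj u x)
    (hdeg : ∀ x ∈ s, m + 1 ≤ 2 * #{y ∈ s | H.Adj x y})
    (hpath : ∀ xs, H.IsPathIn s xs → xs.length ≤ m + 1) : #s ≤ m + 1 := by
  by_contra! hs
  obtain ⟨xs, hxs, hmax⟩ := exists_isPathIn_forall_length_le H s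
  obtain ⟨v, hv⟩ : s.Nonempty := card_pos.1 (by omega)
  have hne : xs ≠ [] := List.ne_nil_of_length_pos <|
    hmax [v] ⟨.singleton v, List.nodup_singleton v, by simpa⟩
  obtain ⟨a, ha⟩ := Option.isSome_iff_exists.1 (List.isSome_head?.2 hne)
  obtain ⟨b, hb⟩ := Option.isSome_iff_exists.1 (List.getLast?_isSome.2 hne)
  have := hpath xs hxs
  obtain ⟨ys, hperm, hcyc⟩ := hxs.exists_perm_cycle hmax ha hb (by
    have := hdeg a (hxs.mem a (List.mem_of_mem_head? ha))
    have := hdeg b (hxs.mem b (List.mem_of_mem_getLast? hb))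
    omega)
  have hys : ∀ y ∈ ys, y ∈ s := fun y hy => hxs.mem y (hperm.subset hy)
  have hnd : ys.Nodup := hperm.nodup_iff.2 hxs.nodup
  have hcard : #ys.toFinset = xs.length := by
    rw [List.toFinset_card_of_nodup hnd, hperm.length_eq]
  obtain ⟨u, hu, x, hx, hux⟩ := hconn ys.toFinset (fun y hy => hys y (List.mem_toFinset.1 hy))
    ⟨a, List.mem_toFinset.2 (hperm.symm.subset (List.mem_of_mem_head? ha))⟩
    (fun h => by rw [h] at hcard; omega)
  rw [mem_sdiff, List.mem_toFinset] at hx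
  obtain ⟨zs, hzs, hlen⟩ := exists_isPathIn_length_eq_succ_of_cycle hcyc hnd hys
    (List.mem_toFinset.1 hu) hx.1 hx.2 hux
  have := hmax zs hzs
  rw [hlen, hperm.length_eq] at this
  omega

end Paths

section Interedges

variable {H : SimpleGraph V} [DecidableRel H.Adj]

theorem card_interedges_eq_sum (A B : Finset V) :
    #(H.interedges A B) = ∑ x ∈ A, #{y ∈ B | H.Adj x y} := by
  rw [interedges_def, card_filter, sum_product]
  simp_rw [card_filter]

theorem card_interedges_singleton_left (v : V) (s : Finset V) :
    #(H.interedges {v} s) = #{y ∈ s | H.Adj v y} := by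
  rw [card_interedges_eq_sum, sum_singleton]

variable [DecidableEq V]

theorem card_interedges_union {A B : Finset V} (h : Disjoint A B) :
    #(H.interedges (A ∪ B) (A ∪ B)) =
      #(H.interedges A A) + #(H.interedges B B) + 2 * #(H.interedges A B) := by
  have hcomm : #(H.interedges B A) = #(H.interedges A B) := by
    have := H.symm
    exact Rel.card_interedges_comm (r := H.Adj) B A
  simp only [card_interedges_eq_sum] at hcomm ⊢
  rw [sum_union h]
  simp only [filter_union, card_union_of_disjoint (disjoint_filter_filter h), sum_add_distrib]
  omega

theorem card_interedges_erase {s : Finset V} {v : V} (hv : v ∈ s) :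
    #(H.interedges s s) =
      #(H.interedges (s.erase v) (s.erase v)) + 2 * #{y ∈ s | H.Adj v y} := by
  have h := card_interedges_union (H := H) (disjoint_singleton_left.2 (notMem_erase v s))
  rwa [← insert_eq, insert_erase hv, card_interedges_singleton_left,
    card_interedges_singleton_left, filter_singleton, if_neg (H.loopless.irrefl v), card_empty,
    zero_add, filter_erase, erase_eq_of_notMem fun hv => H.loopless.irrefl v (mem_filter.1 hv).2]
    at h

theorem card_interedges_eq_add_of_forall_not_adj {s C : Finset V} (hC : C ⊆ s)
    (hcut : ∀ u ∈ C, ∀ x ∈ s \ C, ¬H.Adj u x) :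
    #(H.interedges s s) = #(H.interedges C C) + #(H.interedges (s \ C) (s \ C)) := by
  have h := card_interedges_union (H := H) (disjoint_sdiff (s := C) (t := s))
  have hempty : H.interedges C (s \ C) = ∅ := by
    ext ⟨u, x⟩
    simpa [mem_interedges_iff] using fun hu hx hxC => hcut u hu x (mem_sdiff.2 ⟨hx, hxC⟩)
  rwa [union_sdiff_of_subset hC, hempty, card_empty, mul_zero, add_zero] at h

theorem card_interedges_self_le (s : Finset V) : #(H.interedges s s) ≤ #s * (#s - 1) := by
  rw [card_interedges_eq_sum]
  refine (sum_le_sum fun x hx => ?_).trans_eq (sum_const_nat fun _ _ => rfl)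
  rw [← card_erase_of_mem hx]
  exact card_le_card fun y hy => by
    rw [mem_filter] at hy
    exact mem_erase.2 ⟨hy.2.ne', hy.1⟩

/-- The Erdős–Gallai theorem: `interedges s s` counts every edge inside `s` twice. -/
theorem card_interedges_le_of_forall_isPathIn_length_le (m : ℕ) (s : Finset V)
    (hpath : ∀ xs, H.IsPathIn s xs → xs.length ≤ m + 1) : #(H.interedges s s) ≤ m * #s := by
  induction s using Finset.strongInduction with
  | H s ih =>
  have ih' : ∀ t ⊂ s, #(H.interedges t t) ≤ m * #t := fun t hts =>
    ih t hts fun xs hxs => hpath xs (hxs.mono hts.subset)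
  by_cases hsmall : #s ≤ m + 1
  · calc #(H.interedges s s) ≤ #s * (#s - 1) := card_interedges_self_le s
      _ ≤ #s * m := Nat.mul_le_mul_left _ (by omega)
      _ = m * #s := mul_comm _ _
  by_cases hlow : ∃ v ∈ s, 2 * #{y ∈ s | H.Adj v y} ≤ m
  · obtain ⟨v, hv, hdeg⟩ := hlow
    have := ih' _ (erase_ssubset hv)
    rw [card_interedges_erase hv, ← card_erase_add_one hv, mul_add_one]
    omega
  by_cases hcut : ∃ C ⊆ s, C.Nonempty ∧ C ≠ s ∧ ∀ u ∈ C, ∀ x ∈ s \ C, ¬H.Adj u x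
  · obtain ⟨C, hCs, hC, hCs', hcut⟩ := hcut
    have := ih' C (ssubset_of_subset_of_ne hCs hCs')
    have := ih' (s \ C) (sdiff_ssubset hCs hC)
    rw [card_interedges_eq_add_of_forall_not_adj hCs hcut, ← card_sdiff_add_card_eq_card hCs,
      mul_add]
    omega
  push Not at hlow hcut
  exact absurd (card_le_of_forall_isPathIn_length_le
    (fun C hCs hC hCs' => by simpa using hcut C hCs hC hCs')
    (fun x hx => by have := hlow x hx; omega) hpath) hsmall

end Interedges

section Copies

variable {G : SimpleGraph V}

theorem exists_isCopyOf_cycleGraph {ys : List V} (hc : Cycle.Chain G.Adj ys) (hnd : ys.Nodup) :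
    ∃ B : G.Subgraph, B.IsCopyOf (cycleGraph ys.length) ∧ B.verts = {x | x ∈ ys} := by
  have hsucc {i j : Fin ys.length} (hij : (j - i).val = 1) : G.Adj ys[i] ys[j] := by
    have : NeZero ys.length := ⟨(Nat.zero_lt_of_lt i.isLt).ne'⟩
    have hj : j.val = (i.val + 1) % ys.length := by
      rw [← sub_add_cancel j i, Fin.val_add, hij, add_comm]
    simp only [Fin.getElem_fin, hj]
    exact hc.rel_getElem_mod i i.isLt
  let f : Copy (cycleGraph ys.length) G :=
    ⟨⟨fun i => ys[i], fun hij =>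
      (cycleGraph_adj'.1 hij).elim (fun h => (hsucc h).symm) hsucc⟩,
      fun i j hij => Fin.ext ((List.Nodup.getElem_inj_iff hnd).1 hij)⟩
  refine ⟨f.toSubgraph, ⟨f.isoToSubgraph.symm⟩, ?_⟩
  ext x
  simp [f, List.mem_iff_getElem, Fin.exists_iff]

theorem isCopyOf_completeGraph_iff {n : ℕ} {A : G.Subgraph} :
    A.IsCopyOf (completeGraph (Fin n)) ↔
      ∃ t : Finset V, G.IsNClique n t ∧ A = (⊤ : G.Subgraph).induce t := by
  constructor
  · rintro ⟨e⟩
    have hadj (x y : A.verts) : A.Adj x y ↔ x ≠ y := by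
      rw [← Subgraph.coe_adj, ← e.map_rel_iff, top_adj, e.injective.ne_iff]
    have : Finite A.verts := .of_equiv _ e.toEquiv.symm
    obtain ⟨t, ht⟩ := A.verts.toFinite.exists_finset_coe
    have hind : A.IsInduced := fun x hx y hy hxy =>
      (hadj ⟨x, hx⟩ ⟨y, hy⟩).2 (by simpa using hxy.ne)
    refine ⟨t, ⟨fun x hx y hy hxy => ?_, ?_⟩, ?_⟩
    · rw [Finset.mem_coe, ← Finset.mem_coe, ht] at hx hy
      exact A.adj_sub ((hadj ⟨x, hx⟩ ⟨y, hy⟩).2 (by simpa using hxy))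
    · rw [← Nat.card_eq_finsetCard, ← Nat.card_fin n]
      exact Nat.card_congr ((Equiv.setCongr ht).trans e.toEquiv)
    · rw [ht, hind.induce_top_verts]
  · rintro ⟨t, ht, rfl⟩
    let e : ((⊤ : G.Subgraph).induce t).verts ≃ Fin n := t.equivFinOfCardEq ht.card_eq
    refine ⟨⟨e, fun {x y} => ?_⟩⟩
    have hx : (x : V) ∈ t := x.2
    have hy : (y : V) ∈ t := y.2
    rw [top_adj, e.injective.ne_iff, Subgraph.coe_adj, Subgraph.induce_adj, Subgraph.top_adj]
    exact ⟨fun h => ⟨hx, hy, ht.isClique hx hy (Subtype.coe_injective.ne h)⟩,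
      fun h => Subtype.coe_injective.ne_iff.1 h.2.2.ne⟩

theorem card_isCopyOf_completeGraph [Fintype V] [DecidableEq V] [DecidableRel G.Adj] (n : ℕ)
    (P : G.Subgraph → Prop) [DecidablePred P] :
    Nat.card {A : G.Subgraph // A.IsCopyOf (completeGraph (Fin n)) ∧ P A} =
      #{t ∈ G.cliqueFinset n | P ((⊤ : G.Subgraph).induce (t : Finset V))} := by
  rw [← Nat.card_eq_finsetCard]
  refine (Nat.card_congr (Equiv.ofBijective (fun t => ⟨(⊤ : G.Subgraph).induce t,
    isCopyOf_completeGraph_iff.2 ⟨t, mem_cliqueFinset_iff.1 (mem_filter.1 t.2).1, rfl⟩,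
    (mem_filter.1 t.2).2⟩) ⟨fun t t' h => ?_, ?_⟩)).symm
  · exact Subtype.ext (Finset.coe_injective (congrArg (·.1.verts) h))
  · rintro ⟨A, hA, hP⟩
    obtain ⟨t, ht, rfl⟩ := isCopyOf_completeGraph_iff.1 hA
    exact ⟨⟨t, mem_filter.2 ⟨mem_cliqueFinset_iff.2 ht, hP⟩⟩, rfl⟩

end Copies

section Triangles

variable [DecidableEq V]

def linkGraph (T : Finset (Finset V)) (v : V) : SimpleGraph V where
  Adj x y := x ≠ y ∧ {v, x, y} ∈ T
  symm := ⟨fun x y h => ⟨h.1.symm, by rw [Finset.pair_comm]; exact h.2⟩⟩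
  loopless := ⟨fun _ h => h.1 rfl⟩

theorem linkGraph_adj {T : Finset (Finset V)} {v x y : V} :
    (linkGraph T v).Adj x y ↔ x ≠ y ∧ {v, x, y} ∈ T :=
  Iff.rfl

instance (T : Finset (Finset V)) (v : V) : DecidableRel (linkGraph T v).Adj :=
  fun x y => inferInstanceAs (Decidable (x ≠ y ∧ {v, x, y} ∈ T))

theorem card_interedges_linkGraph {T : Finset (Finset V)} {v : V} {s : Finset V}
    (hT : ∀ t ∈ T, #t = 3) (hv : v ∉ s) (hs : ∀ t ∈ T, v ∈ t → t.erase v ⊆ s) :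
    #((linkGraph T v).interedges s s) = 2 * #{t ∈ T | v ∈ t} := by
  have hmaps : Set.MapsTo (fun p : V × V => ({v, p.1, p.2} : Finset V))
      ↑((linkGraph T v).interedges s s) ↑({t ∈ T | v ∈ t} : Finset (Finset V)) :=
    fun p hp => by
    rw [mem_coe, mem_interedges_iff] at hp
    exact mem_filter.2 ⟨hp.2.2.2, mem_insert_self _ _⟩
  rw [card_eq_sum_card_fiberwise hmaps, mul_comm, ← smul_eq_mul, ← sum_const]
  refine sum_congr rfl fun t ht => ?_
  rw [mem_filter] at ht
  have hfiber :
      {p ∈ (linkGraph T v).interedges s s | {v, p.1, p.2} = t} = (t.erase v).offDiag := by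
    ext ⟨x, y⟩
    simp only [mem_filter, mk_mem_interedges_iff, linkGraph_adj, mem_offDiag, mem_erase]
    constructor
    · rintro ⟨⟨hx, hy, hxy, -⟩, rfl⟩
      exact ⟨⟨ne_of_mem_of_not_mem hx hv, by simp⟩, ⟨ne_of_mem_of_not_mem hy hv, by simp⟩,
        hxy⟩
    · rintro ⟨⟨hxv, hxt⟩, ⟨hyv, hyt⟩, hxy⟩
      have hvxy : {v, x, y} = t := eq_of_subset_of_card_le (by simp [insert_subset_iff, *])
        (hT t ht.1 ▸ (card_eq_three.2 ⟨v, x, y, hxv.symm, hyv.symm, hxy, rfl⟩).ge)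
      have hst := hs t ht.1 ht.2
      exact ⟨⟨hst (mem_erase.2 ⟨hxv, hxt⟩), hst (mem_erase.2 ⟨hyv, hyt⟩), hxy, hvxy ▸ ht.1⟩,
        hvxy⟩
  rw [hfiber, offDiag_card, card_erase_of_mem ht.2, hT t ht.1]

open scoped Classical in
noncomputable def niceTriangles [Fintype V] (G : SimpleGraph V) [DecidableRel G.Adj] {W : Type*}
    (F : SimpleGraph W) : Finset (Finset V) :=
  {t ∈ G.cliqueFinset 3 | ((⊤ : G.Subgraph).induce (t : Finset V)).Nice F}

variable [Fintype V] {G : SimpleGraph V} [DecidableRel G.Adj] {W : Type*} {F : SimpleGraph W}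

open scoped Classical in
theorem mem_niceTriangles {t : Finset V} :
    t ∈ G.niceTriangles F ↔
      G.IsNClique 3 t ∧ ((⊤ : G.Subgraph).induce (t : Finset V)).Nice F := by
  rw [niceTriangles, mem_filter, mem_cliqueFinset_iff]

theorem isNClique_of_mem_niceTriangles {t : Finset V} (ht : t ∈ G.niceTriangles F) :
    G.IsNClique 3 t :=
  (mem_niceTriangles.1 ht).1

theorem card_interedges_linkGraph_niceTriangles (v : V) :
    #((linkGraph (G.niceTriangles F) v).interedges (G.neighborFinset v) (G.neighborFinset v)) =
      2 * #{t ∈ G.niceTriangles F | v ∈ t} := by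
  refine card_interedges_linkGraph (fun t ht => (isNClique_of_mem_niceTriangles ht).card_eq)
    (notMem_neighborFinset_self G v) fun t ht hvt x hx => ?_
  rw [mem_erase] at hx
  exact (mem_neighborFinset G v x).2
    ((isNClique_of_mem_niceTriangles ht).isClique hvt hx.2 hx.1.symm)

theorem length_add_two_le_of_isPathIn_linkGraph {l : ℕ} (hl : 3 ≤ l) {v : V} {xs : List V}
    (h : (linkGraph (G.niceTriangles (cycleGraph l)) v).IsPathIn (G.neighborFinset v) xs) :
    xs.length + 2 ≤ l := by
  by_contra! hlt
  have hws := h.take (l - 1)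
  have hlen : (xs.take (l - 1)).length = l - 1 := by simp; omega
  rcases hw : xs.take (l - 1) with _ | ⟨x₁, _ | ⟨x₂, r⟩⟩
  · simp [hw] at hlen; omega
  · simp [hw] at hlen; omega
  rw [hw] at hws hlen
  have hG : ∀ ⦃x y⦄, (linkGraph (G.niceTriangles (cycleGraph l)) v).Adj x y → G.Adj x y :=
    fun _ _ hxy => (is3Clique_triple_iff.1 (isNClique_of_mem_niceTriangles hxy.2)).2.2
  have hv {x : V} (hx : x ∈ x₁ :: x₂ :: r) : G.Adj v x :=
    (mem_neighborFinset G v x).1 (hws.mem x hx)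
  have hcyc : Cycle.Chain G.Adj (v :: x₁ :: x₂ :: r : List V) := by
    refine Cycle.chain_coe_iff.2 ⟨List.isChain_cons_cons.2 ⟨hv (by simp), hws.isChain.imp hG⟩,
      fun y hy z hz => ?_⟩
    obtain rfl : z = v := by simpa using hz.symm
    exact (hv (List.mem_of_mem_getLast? (by simpa using hy))).symm
  obtain ⟨B, hB, hBverts⟩ := exists_isCopyOf_cycleGraph hcyc
    (List.nodup_cons.2 ⟨fun hv' => notMem_neighborFinset_self G v (hws.mem v hv'), hws.nodup⟩)
  have hcl : (v :: x₁ :: x₂ :: r).length = l := by simp at hlen ⊢; omega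
  refine (mem_niceTriangles.1 (List.isChain_cons_cons.1 hws.isChain).1.2).2 B (hcl ▸ hB)
    (Or.inl ?_)
  simp [hBverts, Set.insert_subset_iff]

theorem two_mul_card_niceTriangles_mem_le {l : ℕ} (hl : 3 ≤ l) (v : V) :
    2 * #{t ∈ G.niceTriangles (cycleGraph l) | v ∈ t} ≤ (l - 3) * G.degree v := by
  rw [← card_interedges_linkGraph_niceTriangles, ← card_neighborFinset_eq_degree]
  refine card_interedges_le_of_forall_isPathIn_length_le (l - 3) _ fun xs hxs => ?_
  have := length_add_two_le_of_isPathIn_linkGraph hl hxs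
  omega

theorem three_mul_card_niceTriangles_le {l : ℕ} (hl : 3 ≤ l) :
    3 * #(G.niceTriangles (cycleGraph l)) ≤ (l - 3) * #G.edgeFinset := by
  have hsum : ∑ v, #{t ∈ G.niceTriangles (cycleGraph l) | v ∈ t} =
      3 * #(G.niceTriangles (cycleGraph l)) :=
    calc ∑ v, #{t ∈ G.niceTriangles (cycleGraph l) | v ∈ t}
        = ∑ t ∈ G.niceTriangles (cycleGraph l), #t := by
          simp_rw [card_filter]
          rw [sum_comm]
          simp
      _ = 3 * #(G.niceTriangles (cycleGraph l)) := by
          rw [sum_congr rfl fun t ht => (isNClique_of_mem_niceTriangles ht).card_eq, sum_const,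
            smul_eq_mul, mul_comm]
  have := sum_le_sum fun v (_ : v ∈ univ) => two_mul_card_niceTriangles_mem_le (G := G) hl v
  rw [← mul_sum, ← mul_sum, hsum, sum_degrees_eq_twice_card_edges, mul_left_comm (l - 3)]
    at this
  exact Nat.le_of_mul_le_mul_left this two_pos

open scoped Classical in
theorem niceCopyCount_completeGraph_three :
    niceCopyCount (completeGraph (Fin 3)) F G = #(G.niceTriangles F) :=
  card_isCopyOf_completeGraph 3 fun A => A.Nice F

open scoped Classical in
theorem card_isCopyOf_completeGraph_three_nice_mem (v : V) :
    Nat.card {A : G.Subgraph // A.IsCopyOf (completeGraph (Fin 3)) ∧ A.Nice F ∧ v ∈ A.verts} =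
      #{t ∈ G.niceTriangles F | v ∈ t} := by
  rw [card_isCopyOf_completeGraph 3 fun A => A.Nice F ∧ v ∈ A.verts]
  congr 1
  ext t
  simp [mem_niceTriangles, and_assoc]

end Triangles

end SimpleGraph

/-- For `ℓ ≥ 4`, any graph `G` has at most `(ℓ-3)|E(G)|/3` triangles aligning with no copy
of `C_ℓ`; moreover every vertex `v` lies in at most `(ℓ-3)d(v)/2` such triangles. -/
theorem niceTriangles_le {V : Type*} [Fintype V] (l : ℕ) (hl : 4 ≤ l) (G : SimpleGraph V) :
    (niceCopyCount (completeGraph (Fin 3)) (cycleGraph l) G : ℝ)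
      ≤ ((l : ℝ) - 3) * (G.edgeSet.ncard : ℝ) / 3 ∧
    ∀ v : V,
      (Nat.card {A : G.Subgraph // A.IsCopyOf (completeGraph (Fin 3)) ∧
          A.Nice (cycleGraph l) ∧ v ∈ A.verts} : ℝ)
        ≤ ((l : ℝ) - 3) * ((G.neighborSet v).ncard : ℝ) / 2 := by
  classical
  have hl3 : ((l - 3 : ℕ) : ℝ) = (l : ℝ) - 3 := by push_cast [show 3 ≤ l by omega]; ring
  refine ⟨?_, fun v => ?_⟩
  · rw [niceCopyCount_completeGraph_three, ← coe_edgeFinset, Set.ncard_coe_finset,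
      le_div_iff₀' (by norm_num), ← hl3]
    exact_mod_cast three_mul_card_niceTriangles_le (G := G) (show 3 ≤ l by omega)
  · rw [card_isCopyOf_completeGraph_three_nice_mem, ← coe_neighborFinset, Set.ncard_coe_finset,
      card_neighborFinset_eq_degree, le_div_iff₀' (by norm_num), ← hl3]
    exact_mod_cast two_mul_card_niceTriangles_mem_le (G := G) (show 3 ≤ l by omega) v
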